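/- arXiv:0711.1143 — 2 statements merged into one kernel-verified Lean document; each statement's English description precedes it below -/
import Mathlib

section
/- Characterization of Pareto optimality by a first order condition: for W ∈ L^∞ and (X_t)_{t∈𝕋} ∈ A(W), the allocation (X_t) is Pareto optimal if and only if there exists (λ_1,...,λ_T) ∈ (0,∞)^T such that the process (λ_t u_t'(X̃_t))_{t∈𝕋} is an (F_t)-martingale. -/
/-!
Write `x̃_t = X_t / B_t` and `a_t = u_t'(x̃_t)`. If `λ_t a_t` is a martingale, then for any
allocation `Y` the tangent inequality of the concave `u_t` and the tower property give
`∑_t λ_t (E u_t(Ỹ_t) - E u_t(x̃_t)) ≤ E[λ_T a_T ∑_t (Ỹ_t - x̃_t)] = 0`: `X` maximizes the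
`λ`-weighted expected utility, so no allocation Pareto-dominates it.

Conversely, let `X` be Pareto optimal, `s < t` and `Z` bounded and `F_s`-measurable. Shifting the
discounted amount `ε Z` from date `t` to date `s` is admissible, and for small `ε > 0` it raises
both expected utilities unless `E[a_s Z] ≤ 0` or `E[a_t Z] ≥ 0`. Testing with `Z = α 1_A + β`,
`A ∈ F_s`, this forces `E[a_t 1_A] / E[a_t] = E[a_s 1_A] / E[a_s]`, which is the martingale
property of `a_t / E[a_t]`.
-/

open MeasureTheory Finset Real

noncomputable section

/-- `A(W)`: the set of admissible intertemporal allocations of the risk `W`: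
adapted processes `(Y_t)_{t∈𝕋}` with each `Y_t` essentially bounded and
`∑_{t∈𝕋} Y_t/B_t = W` a.s. -/
def IsAlloc {Ω : Type*} [mΩ : MeasurableSpace Ω] (μ : Measure Ω) (T : ℕ)
    (ℱ : ℕ → MeasurableSpace Ω) (B : ℕ → Ω → ℝ) (W : Ω → ℝ) (Y : ℕ → Ω → ℝ) : Prop :=
  (∀ t ∈ Finset.Icc 1 T, Measurable[ℱ t] (Y t) ∧ ∃ C : ℝ, ∀ᵐ ω ∂μ, |Y t ω| ≤ C) ∧
  ∀ᵐ ω ∂μ, ∑ t ∈ Finset.Icc 1 T, Y t ω / B t ω = W ω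

/-- The integrated expected utility `∑_{t∈𝕋} E[u_t(Ỹ_t)]` of an allocation. -/
def allocVal {Ω : Type*} [mΩ : MeasurableSpace Ω] (μ : Measure Ω) (T : ℕ)
    (u : ℕ → ℝ → ℝ) (B : ℕ → Ω → ℝ) (Y : ℕ → Ω → ℝ) : ℝ :=
  ∑ t ∈ Finset.Icc 1 T, ∫ ω, u t (Y t ω / B t ω) ∂μ

/-- The utility functional `U(W) = sup { ∑_t E[u_t(Ỹ_t)] : Y ∈ A(W) }`. -/
def Util {Ω : Type*} [mΩ : MeasurableSpace Ω] (μ : Measure Ω) (T : ℕ)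
    (ℱ : ℕ → MeasurableSpace Ω) (u : ℕ → ℝ → ℝ) (B : ℕ → Ω → ℝ) (W : Ω → ℝ) : ℝ :=
  sSup {s : ℝ | ∃ Y, IsAlloc μ T ℱ B W Y ∧ s = allocVal μ T u B Y}

open Filter Topology
open scoped ENNReal

theorem ConcaveOn.le_add_deriv_mul_sub {f : ℝ → ℝ} (hf : ConcaveOn ℝ Set.univ f) {x : ℝ}
    (hd : DifferentiableAt ℝ f x) (y : ℝ) : f y ≤ f x + deriv f x * (y - x) := by
  rcases lt_trichotomy x y with h | rfl | h
  · have := hf.slope_le_of_hasDerivAt (Set.mem_univ x) (Set.mem_univ y) h hd.hasDerivAt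
    rw [slope_def_field, div_le_iff₀ (sub_pos.2 h)] at this
    linarith
  · simp
  · have := hf.le_slope_of_hasDerivAt (Set.mem_univ y) (Set.mem_univ x) h hd.hasDerivAt
    rw [slope_def_field, le_div_iff₀ (sub_pos.2 h)] at this
    linarith

theorem HasDerivAt.eventually_nhdsGT_lt {f : ℝ → ℝ} {f' x : ℝ} (hf : HasDerivAt f f' x)
    (hf' : 0 < f') : ∀ᶠ y in 𝓝[>] x, f x < f y := by
  have hslope := (hasDerivAt_iff_tendsto_slope.1 hf).mono_left (nhdsGT_le_nhdsNE x)
  filter_upwards [hslope.eventually (eventually_gt_nhds hf'), self_mem_nhdsWithin]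
    with y hpos hy
  rw [slope_def_field, div_pos_iff_of_pos_right (sub_pos.2 hy)] at hpos
  exact sub_pos.1 hpos

theorem mul_eq_mul_of_forall_not_pos_and_neg {a b c d : ℝ}
    (h : ∀ α β : ℝ, ¬(0 < α * a + β * c ∧ α * b + β * d < 0)) : c * b = d * a := by
  by_contra hne
  have hΔ : a * d - b * c ≠ 0 := fun h' => hne (by linarith)
  -- `(α, β)` solves `α a + β c = 1`, `α b + β d = -1`
  apply h ((c + d) / (a * d - b * c)) (-(a + b) / (a * d - b * c))
  constructor
  · rw [show (c + d) / (a * d - b * c) * a + -(a + b) / (a * d - b * c) * c = 1 by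
      field_simp; ring]
    exact one_pos
  · rw [show (c + d) / (a * d - b * c) * b + -(a + b) / (a * d - b * c) * d = -1 by
      field_simp; ring]
    exact neg_one_lt_zero

namespace MeasureTheory

variable {Ω : Type*} {mΩ : MeasurableSpace Ω} {μ : Measure Ω}

theorem MemLp.exists_ae_abs_le {f : Ω → ℝ} (hf : MemLp f ∞ μ) :
    ∃ C, ∀ᵐ ω ∂μ, |f ω| ≤ C :=
  ⟨_, ae_le_lpNorm_exponent_top hf⟩

theorem _root_.Continuous.comp_memLp_top {g : ℝ → ℝ} (hg : Continuous g) {f : Ω → ℝ}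
    (hf : MemLp f ∞ μ) : MemLp (fun ω => g (f ω)) ∞ μ := by
  obtain ⟨C, hC⟩ := hf.exists_ae_abs_le
  obtain ⟨M, hM⟩ := (isCompact_closedBall (0 : ℝ) C).exists_bound_of_continuousOn hg.continuousOn
  refine memLp_top_of_bound (hg.comp_aestronglyMeasurable hf.1) M ?_
  filter_upwards [hC] with ω hω
  exact hM _ (mem_closedBall_zero_iff.2 hω)

theorem integral_comp_le_integral_comp_add_integral_deriv_mul [IsFiniteMeasure μ] {f : ℝ → ℝ}
    (hconc : ConcaveOn ℝ Set.univ f) (hf : ContDiff ℝ 1 f) {x y : Ω → ℝ}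
    (hx : MemLp x ∞ μ) (hy : MemLp y ∞ μ) :
    ∫ ω, f (y ω) ∂μ ≤ ∫ ω, f (x ω) ∂μ + ∫ ω, deriv f (x ω) * (y ω - x ω) ∂μ := by
  have hfx := (hf.continuous.comp_memLp_top hx).integrable le_top
  have hfy := (hf.continuous.comp_memLp_top hy).integrable le_top
  have hdx : Integrable (fun ω => deriv f (x ω) * (y ω - x ω)) μ :=
    ((hy.sub hx).mul (r := ∞) ((hf.continuous_deriv le_rfl).comp_memLp_top hx)).integrable le_top
  rw [← integral_add hfx hdx]
  exact integral_mono hfy (hfx.add hdx)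
    fun ω => hconc.le_add_deriv_mul_sub (hf.differentiable one_ne_zero _) _

theorem hasDerivAt_integral_comp_add_mul [IsFiniteMeasure μ] {f : ℝ → ℝ} (hf : ContDiff ℝ 1 f)
    {x z : Ω → ℝ} (hx : MemLp x ∞ μ) (hz : MemLp z ∞ μ) :
    HasDerivAt (fun ε => ∫ ω, f (x ω + ε * z ω) ∂μ) (∫ ω, deriv f (x ω) * z ω ∂μ) 0 := by
  obtain ⟨Cx, hCx⟩ := hx.exists_ae_abs_le
  obtain ⟨Cz, hCz⟩ := hz.exists_ae_abs_le
  have hf' := hf.continuous_deriv le_rfl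
  obtain ⟨M, hM⟩ :=
    (isCompact_closedBall (0 : ℝ) (Cx + Cz)).exists_bound_of_continuousOn hf'.continuousOn
  have hxz (ε : ℝ) : MemLp (fun ω => x ω + ε * z ω) ∞ μ := hx.add (hz.const_mul ε)
  have key := hasDerivAt_integral_of_dominated_loc_of_deriv_le (μ := μ) (x₀ := 0)
    (F := fun ε ω => f (x ω + ε * z ω)) (F' := fun ε ω => deriv f (x ω + ε * z ω) * z ω)
    (bound := fun _ => M * Cz) (Metric.ball_mem_nhds 0 one_pos)
    (Eventually.of_forall fun ε => (hf.continuous.comp_memLp_top (hxz ε)).1)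
    ((hf.continuous.comp_memLp_top (hxz 0)).integrable le_top)
    ((hf'.comp_aestronglyMeasurable (hxz 0).1).mul hz.1) ?_ (integrable_const _) ?_
  · simpa using key.2
  · filter_upwards [hCx, hCz] with ω hxω hzω ε hε
    have hε1 : |ε| ≤ 1 := by simpa using (Metric.mem_ball.1 hε).le
    have hball : |x ω + ε * z ω| ≤ Cx + Cz := by
      calc |x ω + ε * z ω| ≤ |x ω| + |ε| * |z ω| := by rw [← abs_mul]; exact abs_add_le _ _
        _ ≤ Cx + 1 * Cz := by gcongr
        _ = Cx + Cz := by ring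
    have hMω := hM _ (mem_closedBall_zero_iff.2 hball)
    rw [norm_mul]
    exact mul_le_mul hMω hzω (norm_nonneg _) ((norm_nonneg _).trans hMω)
  · refine Eventually.of_forall fun ω ε _ => ?_
    have hlin : HasDerivAt (fun ε => x ω + ε * z ω) (z ω) ε := by
      simpa using ((hasDerivAt_id ε).mul_const (z ω)).const_add (x ω)
    exact (hf.differentiable one_ne_zero _).hasDerivAt.comp ε hlin

theorem eventually_integral_comp_lt_integral_comp_add_mul [IsFiniteMeasure μ] {f : ℝ → ℝ}
    (hf : ContDiff ℝ 1 f) {x z : Ω → ℝ} (hx : MemLp x ∞ μ) (hz : MemLp z ∞ μ)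
    (hpos : 0 < ∫ ω, deriv f (x ω) * z ω ∂μ) :
    ∀ᶠ ε in 𝓝[>] 0, ∫ ω, f (x ω) ∂μ < ∫ ω, f (x ω + ε * z ω) ∂μ := by
  simpa using (hasDerivAt_integral_comp_add_mul hf hx hz).eventually_nhdsGT_lt hpos

theorem integral_mul_eq_of_condExp_ae_eq {m : MeasurableSpace Ω} (hm : m ≤ mΩ)
    [SigmaFinite (μ.trim hm)] {d M M' : Ω → ℝ} (hd : StronglyMeasurable[m] d)
    (hdM : Integrable (d * M) μ) (hM : Integrable M μ) (hM' : μ[M | m] =ᵐ[μ] M') :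
    ∫ ω, d ω * M ω ∂μ = ∫ ω, d ω * M' ω ∂μ :=
  calc ∫ ω, d ω * M ω ∂μ = ∫ ω, (μ[d * M | m]) ω ∂μ := (integral_condExp hm).symm
    _ = ∫ ω, d ω * M' ω ∂μ := integral_congr_ae
      ((condExp_mul_of_stronglyMeasurable_left hd hdM hM).trans (EventuallyEq.rfl.mul hM'))

theorem integral_mul_indicator_add_const {a : Ω → ℝ} (ha : Integrable a μ) {A : Set Ω}
    (hA : MeasurableSet A) (α β : ℝ) :
    ∫ ω, a ω * (α * A.indicator 1 ω + β) ∂μ = α * ∫ ω in A, a ω ∂μ + β * ∫ ω, a ω ∂μ := by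
  have hsplit : (fun ω => a ω * (α * A.indicator 1 ω + β)) =
      fun ω => α * A.indicator a ω + β * a ω := by
    funext ω
    by_cases h : ω ∈ A
    · simp only [Set.indicator_of_mem h, Pi.one_apply]; ring
    · simp only [Set.indicator_of_notMem h]; ring
  rw [hsplit, integral_add ((ha.indicator hA).const_mul α) (ha.const_mul β), integral_const_mul,
    integral_const_mul, integral_indicator hA]

end MeasureTheory

section DiscountFactor

variable {Ω : Type*} {T : ℕ} {ℱ : ℕ → MeasurableSpace Ω} {B : ℕ → Ω → ℝ}

structure IsDiscountFactor (ℱ : ℕ → MeasurableSpace Ω) (T : ℕ) (B : ℕ → Ω → ℝ) : Prop where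
  measurable : ∀ t ∈ Icc 1 T, Measurable[ℱ t] (B t)
  one_le : ∀ t ∈ Icc 1 T, ∀ ω, 1 ≤ B t ω
  bounded : ∀ t ∈ Icc 1 T, ∃ C, ∀ ω, B t ω ≤ C

theorem isDiscountFactor_of_eq_prod (hℱmono : Monotone ℱ) {r : ℕ → Ω → ℝ}
    (hr_meas : ∀ t ∈ Icc 1 T, Measurable[ℱ (t - 1)] (r t))
    (hr_nonneg : ∀ t ∈ Icc 1 T, ∀ ω, 0 ≤ r t ω) (hr_bdd : ∀ t ∈ Icc 1 T, ∃ C, ∀ ω, r t ω ≤ C)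
    (hB : ∀ t ω, B t ω = ∏ k ∈ Icc 1 t, (1 + r k ω)) : IsDiscountFactor ℱ T B := by
  have hIcc {t k : ℕ} (ht : t ∈ Icc 1 T) (hk : k ∈ Icc 1 t) : k ∈ Icc 1 T ∧ k - 1 ≤ t := by
    simp only [mem_Icc] at ht hk ⊢
    omega
  choose! C hC using hr_bdd
  refine ⟨fun t ht => ?_, fun t ht ω => ?_, fun t ht => ⟨∏ k ∈ Icc 1 t, (1 + C k), fun ω => ?_⟩⟩
  · rw [funext (hB t)]
    exact Finset.measurable_prod _ fun k hk => measurable_const.add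
      ((hr_meas k (hIcc ht hk).1).mono (hℱmono (hIcc ht hk).2) le_rfl)
  · rw [hB]
    exact one_le_prod fun k hk => le_add_of_nonneg_right (hr_nonneg k (hIcc ht hk).1 ω)
  · rw [hB]
    exact prod_le_prod (fun k hk => by linarith [hr_nonneg k (hIcc ht hk).1 ω])
      fun k hk => by linarith [hC k (hIcc ht hk).1 ω]

theorem IsDiscountFactor.add_mul_div (hB : IsDiscountFactor ℱ T B) {t : ℕ} (ht : t ∈ Icc 1 T)
    (ω : Ω) (x d : ℝ) : (x + B t ω * d) / B t ω = x / B t ω + d := by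
  have := (zero_lt_one.trans_le (hB.one_le t ht ω)).ne'
  field_simp

end DiscountFactor

section ParetoOptimality

variable {Ω : Type*} [mΩ : MeasurableSpace Ω] {μ : Measure Ω} {T : ℕ}
  {ℱ : ℕ → MeasurableSpace Ω} {B : ℕ → Ω → ℝ} {W : Ω → ℝ} {u : ℕ → ℝ → ℝ} {X : ℕ → Ω → ℝ}

def IsParetoOptimal (μ : Measure Ω) (T : ℕ) (ℱ : ℕ → MeasurableSpace Ω) (u : ℕ → ℝ → ℝ)
    (B : ℕ → Ω → ℝ) (W : Ω → ℝ) (X : ℕ → Ω → ℝ) : Prop :=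
  ¬ ∃ Y, IsAlloc μ T ℱ B W Y ∧
    (∀ t ∈ Icc 1 T, ∫ ω, u t (X t ω / B t ω) ∂μ ≤ ∫ ω, u t (Y t ω / B t ω) ∂μ) ∧
    (∃ t₀ ∈ Icc 1 T, ∫ ω, u t₀ (X t₀ ω / B t₀ ω) ∂μ < ∫ ω, u t₀ (Y t₀ ω / B t₀ ω) ∂μ)

def FirstOrderCondition (μ : Measure Ω) (T : ℕ) (ℱ : ℕ → MeasurableSpace Ω)
    (u : ℕ → ℝ → ℝ) (B : ℕ → Ω → ℝ) (X : ℕ → Ω → ℝ) : Prop :=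
  ∃ lam : ℕ → ℝ, (∀ t ∈ Icc 1 T, 0 < lam t) ∧
    ∀ s ∈ Icc 1 T, ∀ t ∈ Icc 1 T, s ≤ t →
      μ[(fun ω => lam t * deriv (u t) (X t ω / B t ω)) | ℱ s]
        =ᵐ[μ] fun ω => lam s * deriv (u s) (X s ω / B s ω)

theorem IsDiscountFactor.memLp (hℱle : ∀ t, ℱ t ≤ mΩ) (hB : IsDiscountFactor ℱ T B) {t : ℕ}
    (ht : t ∈ Icc 1 T) : MemLp (B t) ∞ μ := by
  obtain ⟨C, hC⟩ := hB.bounded t ht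
  refine memLp_top_of_bound ((hB.measurable t ht).mono (hℱle t) le_rfl).aestronglyMeasurable C
    (Eventually.of_forall fun ω => ?_)
  rw [norm_of_nonneg (zero_le_one.trans (hB.one_le t ht ω))]
  exact hC ω

theorem IsAlloc.measurable_div (hX : IsAlloc μ T ℱ B W X) (hB : IsDiscountFactor ℱ T B)
    {t : ℕ} (ht : t ∈ Icc 1 T) : Measurable[ℱ t] fun ω => X t ω / B t ω :=
  (hX.1 t ht).1.div (hB.measurable t ht)

theorem IsAlloc.memLp_div (hℱle : ∀ t, ℱ t ≤ mΩ) (hX : IsAlloc μ T ℱ B W X)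
    (hB : IsDiscountFactor ℱ T B) {t : ℕ} (ht : t ∈ Icc 1 T) :
    MemLp (fun ω => X t ω / B t ω) ∞ μ := by
  obtain ⟨C, hC⟩ := (hX.1 t ht).2
  refine memLp_top_of_bound ((hX.measurable_div hB ht).mono (hℱle t) le_rfl).aestronglyMeasurable
    C ?_
  filter_upwards [hC] with ω hω
  rw [norm_div, norm_of_nonneg (zero_le_one.trans (hB.one_le t ht ω))]
  exact (div_le_self (norm_nonneg _) (hB.one_le t ht ω)).trans hω

theorem IsAlloc.add_mul (hℱle : ∀ t, ℱ t ≤ mΩ) (hX : IsAlloc μ T ℱ B W X)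
    (hB : IsDiscountFactor ℱ T B) {D : ℕ → Ω → ℝ} (hDm : ∀ t ∈ Icc 1 T, Measurable[ℱ t] (D t))
    (hD : ∀ t ∈ Icc 1 T, MemLp (D t) ∞ μ) (hsum : ∀ ω, ∑ t ∈ Icc 1 T, D t ω = 0) :
    IsAlloc μ T ℱ B W fun t ω => X t ω + B t ω * D t ω := by
  refine ⟨fun t ht => ⟨(hX.1 t ht).1.add ((hB.measurable t ht).mul (hDm t ht)), ?_⟩, ?_⟩
  · obtain ⟨C, hC⟩ := (hX.1 t ht).2
    have hXt : MemLp (X t) ∞ μ :=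
      memLp_top_of_bound (((hX.1 t ht).1.mono (hℱle t) le_rfl).aestronglyMeasurable) C hC
    exact (hXt.add ((hD t ht).mul (r := ∞) (hB.memLp hℱle ht))).exists_ae_abs_le
  · filter_upwards [hX.2] with ω hω
    rw [← hω, ← add_zero (∑ t ∈ Icc 1 T, X t ω / B t ω), ← hsum ω, ← sum_add_distrib]
    exact sum_congr rfl fun t ht => hB.add_mul_div ht ω (X t ω) (D t ω)

theorem sum_mul_integral_le_of_condExp_eq [IsFiniteMeasure μ] (hℱle : ∀ t, ℱ t ≤ mΩ)
    (hT : 1 ≤ T) (hu_conc : ∀ t ∈ Icc 1 T, ConcaveOn ℝ Set.univ (u t))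
    (hu_diff : ∀ t ∈ Icc 1 T, ContDiff ℝ 1 (u t)) {x y : ℕ → Ω → ℝ}
    (hxm : ∀ t ∈ Icc 1 T, Measurable[ℱ t] (x t)) (hx : ∀ t ∈ Icc 1 T, MemLp (x t) ∞ μ)
    (hym : ∀ t ∈ Icc 1 T, Measurable[ℱ t] (y t)) (hy : ∀ t ∈ Icc 1 T, MemLp (y t) ∞ μ)
    (hsum : ∀ᵐ ω ∂μ, ∑ t ∈ Icc 1 T, y t ω = ∑ t ∈ Icc 1 T, x t ω)
    {lam : ℕ → ℝ} (hlam : ∀ t ∈ Icc 1 T, 0 ≤ lam t)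
    (hmart : ∀ s ∈ Icc 1 T, ∀ t ∈ Icc 1 T, s ≤ t →
      μ[(fun ω => lam t * deriv (u t) (x t ω)) | ℱ s]
        =ᵐ[μ] fun ω => lam s * deriv (u s) (x s ω)) :
    ∑ t ∈ Icc 1 T, lam t * ∫ ω, u t (y t ω) ∂μ ≤ ∑ t ∈ Icc 1 T, lam t * ∫ ω, u t (x t ω) ∂μ := by
  have hTmem : T ∈ Icc 1 T := mem_Icc.2 ⟨hT, le_rfl⟩
  set M : ℕ → Ω → ℝ := fun t ω => lam t * deriv (u t) (x t ω)
  have hM : ∀ t ∈ Icc 1 T, MemLp (M t) ∞ μ := fun t ht =>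
    ((hu_diff t ht).continuous_deriv le_rfl |>.comp_memLp_top (hx t ht)).const_mul (lam t)
  have hDM : ∀ t ∈ Icc 1 T, Integrable (fun ω => (y t ω - x t ω) * M T ω) μ := fun t ht =>
    ((hM T hTmem).mul (r := ∞) ((hy t ht).sub (hx t ht))).integrable le_top
  -- tangent inequality at `x t`, then the tower property moves `M t` to the terminal `M T`
  have hstep : ∀ t ∈ Icc 1 T, lam t * ∫ ω, u t (y t ω) ∂μ ≤
      lam t * ∫ ω, u t (x t ω) ∂μ + ∫ ω, (y t ω - x t ω) * M T ω ∂μ := by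
    intro t ht
    have htT : t ≤ T := (mem_Icc.1 ht).2
    calc lam t * ∫ ω, u t (y t ω) ∂μ
        ≤ lam t * (∫ ω, u t (x t ω) ∂μ + ∫ ω, deriv (u t) (x t ω) * (y t ω - x t ω) ∂μ) :=
          mul_le_mul_of_nonneg_left (integral_comp_le_integral_comp_add_integral_deriv_mul
            (hu_conc t ht) (hu_diff t ht) (hx t ht) (hy t ht)) (hlam t ht)
      _ = lam t * ∫ ω, u t (x t ω) ∂μ + ∫ ω, (y t ω - x t ω) * M t ω ∂μ := by
          rw [mul_add]
          congr 1
          rw [← integral_const_mul]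
          exact integral_congr_ae (.of_forall fun ω => by simp only [M]; ring)
      _ = lam t * ∫ ω, u t (x t ω) ∂μ + ∫ ω, (y t ω - x t ω) * M T ω ∂μ := by
          rw [integral_mul_eq_of_condExp_ae_eq (hℱle t) (d := fun ω => y t ω - x t ω)
            ((hym t ht).sub (hxm t ht)).stronglyMeasurable (hDM t ht)
            ((hM T hTmem).integrable le_top) (hmart t ht T hTmem htT)]
  calc ∑ t ∈ Icc 1 T, lam t * ∫ ω, u t (y t ω) ∂μ
      ≤ ∑ t ∈ Icc 1 T, (lam t * ∫ ω, u t (x t ω) ∂μ + ∫ ω, (y t ω - x t ω) * M T ω ∂μ) :=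
        sum_le_sum hstep
    _ = ∑ t ∈ Icc 1 T, lam t * ∫ ω, u t (x t ω) ∂μ := by
        rw [sum_add_distrib, ← integral_finsetSum _ hDM, add_eq_left]
        refine integral_eq_zero_of_ae ?_
        filter_upwards [hsum] with ω hω
        simp [← sum_mul, sum_sub_distrib, hω]

theorem FirstOrderCondition.isParetoOptimal [IsFiniteMeasure μ] (hℱle : ∀ t, ℱ t ≤ mΩ)
    (hB : IsDiscountFactor ℱ T B) (hu_conc : ∀ t ∈ Icc 1 T, ConcaveOn ℝ Set.univ (u t))
    (hu_diff : ∀ t ∈ Icc 1 T, ContDiff ℝ 1 (u t)) (hX : IsAlloc μ T ℱ B W X)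
    (hFOC : FirstOrderCondition μ T ℱ u B X) : IsParetoOptimal μ T ℱ u B W X := by
  rintro ⟨Y, hY, hle, t₀, ht₀, hlt⟩
  obtain ⟨lam, hlam, hmart⟩ := hFOC
  have hsum : ∀ᵐ ω ∂μ, ∑ t ∈ Icc 1 T, Y t ω / B t ω = ∑ t ∈ Icc 1 T, X t ω / B t ω := by
    filter_upwards [hX.2, hY.2] with ω hXω hYω
    rw [hXω, hYω]
  have hweighted := sum_mul_integral_le_of_condExp_eq hℱle
    ((mem_Icc.1 ht₀).1.trans (mem_Icc.1 ht₀).2) hu_conc hu_diff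
    (fun t ht => hX.measurable_div hB ht) (fun t ht => hX.memLp_div hℱle hB ht)
    (fun t ht => hY.measurable_div hB ht) (fun t ht => hY.memLp_div hℱle hB ht) hsum
    (fun t ht => (hlam t ht).le) hmart
  exact hweighted.not_gt <| sum_lt_sum
    (fun t ht => mul_le_mul_of_nonneg_left (hle t ht) (hlam t ht).le)
    ⟨t₀, ht₀, mul_lt_mul_of_pos_left hlt (hlam t₀ ht₀)⟩

theorem IsParetoOptimal.not_pos_and_neg [IsFiniteMeasure μ] (hℱmono : Monotone ℱ)
    (hℱle : ∀ t, ℱ t ≤ mΩ) (hB : IsDiscountFactor ℱ T B) (hX : IsAlloc μ T ℱ B W X)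
    (hPO : IsParetoOptimal μ T ℱ u B W X) {s t : ℕ} (hs : s ∈ Icc 1 T) (ht : t ∈ Icc 1 T)
    (hst : s < t) (hus : ContDiff ℝ 1 (u s)) (hut : ContDiff ℝ 1 (u t)) {Z : Ω → ℝ}
    (hZm : Measurable[ℱ s] Z) (hZ : MemLp Z ∞ μ) :
    ¬(0 < ∫ ω, deriv (u s) (X s ω / B s ω) * Z ω ∂μ ∧
      ∫ ω, deriv (u t) (X t ω / B t ω) * Z ω ∂μ < 0) := by
  rintro ⟨hpos, hneg⟩
  have hneg' : 0 < ∫ ω, deriv (u t) (X t ω / B t ω) * -Z ω ∂μ := by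
    simpa only [mul_neg, integral_neg, neg_pos] using hneg
  obtain ⟨ε, ⟨hεs, hεt⟩, -⟩ :=
    (((eventually_integral_comp_lt_integral_comp_add_mul hus (hX.memLp_div hℱle hB hs) hZ hpos).and
      (eventually_integral_comp_lt_integral_comp_add_mul hut (hX.memLp_div hℱle hB ht) hZ.neg
        hneg')).and self_mem_nhdsWithin).exists
  -- shift `ε Z` of discounted consumption from date `t` to date `s`
  set c : ℕ → ℝ := fun q => ε * ((if q = s then 1 else 0) - if q = t then 1 else 0)
  have hcs : c s = ε := by simp [c, hst.ne]
  have hct : c t = -ε := by simp [c, hst.ne']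
  have hc : ∀ q, q ≠ s → q ≠ t → c q = 0 := fun q h1 h2 => by simp [c, h1, h2]
  have hcsum : ∑ q ∈ Icc 1 T, c q = 0 := by simp [c, ← mul_sum, sum_sub_distrib, hs, ht]
  have hDm : ∀ q ∈ Icc 1 T, Measurable[ℱ q] fun ω => c q * Z ω := by
    intro q _
    by_cases hsq : s ≤ q
    · exact (hZm.mono (hℱmono hsq) le_rfl).const_mul _
    · rw [hc q (by omega) (by omega)]
      simp
  have hY := hX.add_mul hℱle hB hDm (fun _ _ => hZ.const_mul _)
    fun ω => by rw [← sum_mul, hcsum, zero_mul]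
  refine hPO ⟨_, hY, fun q hq => ?_, s, hs, ?_⟩
  · simp only [hB.add_mul_div hq]
    by_cases h1 : q = s
    · subst h1; rw [hcs]; exact hεs.le
    by_cases h2 : q = t
    · subst h2; simpa [hct] using hεt.le
    · simp [hc q h1 h2]
  · simpa only [hB.add_mul_div hs, hcs] using hεs

theorem IsParetoOptimal.mul_setIntegral_eq [IsFiniteMeasure μ] (hℱmono : Monotone ℱ)
    (hℱle : ∀ t, ℱ t ≤ mΩ) (hB : IsDiscountFactor ℱ T B) (hX : IsAlloc μ T ℱ B W X)
    (hPO : IsParetoOptimal μ T ℱ u B W X) (hu_diff : ∀ t ∈ Icc 1 T, ContDiff ℝ 1 (u t))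
    {s t : ℕ} (hs : s ∈ Icc 1 T) (ht : t ∈ Icc 1 T) (hst : s ≤ t) {A : Set Ω}
    (hA : MeasurableSet[ℱ s] A) :
    (∫ ω, deriv (u s) (X s ω / B s ω) ∂μ) * ∫ ω in A, deriv (u t) (X t ω / B t ω) ∂μ =
      (∫ ω, deriv (u t) (X t ω / B t ω) ∂μ) * ∫ ω in A, deriv (u s) (X s ω / B s ω) ∂μ := by
  rcases hst.eq_or_lt with rfl | hst
  · ring
  have ha : ∀ q ∈ Icc 1 T, Integrable (fun ω => deriv (u q) (X q ω / B q ω)) μ := fun q hq =>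
    ((hu_diff q hq).continuous_deriv le_rfl |>.comp_memLp_top (hX.memLp_div hℱle hB hq)).integrable
      le_top
  refine mul_eq_mul_of_forall_not_pos_and_neg fun α β => ?_
  have hZm : Measurable[ℱ s] fun ω => α * A.indicator 1 ω + β :=
    (((measurable_const (a := (1 : ℝ))).indicator hA).const_mul α).add_const β
  have hZ : MemLp (fun ω => α * A.indicator 1 ω + β) ∞ μ :=
    (((memLp_top_const (1 : ℝ)).indicator (hℱle s _ hA)).const_mul α).add (memLp_top_const β)
  have key := hPO.not_pos_and_neg hℱmono hℱle hB hX hs ht hst (hu_diff s hs) (hu_diff t ht) hZm hZ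
  rwa [integral_mul_indicator_add_const (ha s hs) (hℱle s _ hA),
    integral_mul_indicator_add_const (ha t ht) (hℱle s _ hA)] at key

theorem IsParetoOptimal.firstOrderCondition [IsProbabilityMeasure μ] (hℱmono : Monotone ℱ)
    (hℱle : ∀ t, ℱ t ≤ mΩ) (hB : IsDiscountFactor ℱ T B)
    (hu_diff : ∀ t ∈ Icc 1 T, ContDiff ℝ 1 (u t))
    (hu_deriv : ∀ t ∈ Icc 1 T, ∀ x, 0 < deriv (u t) x) (hX : IsAlloc μ T ℱ B W X)
    (hPO : IsParetoOptimal μ T ℱ u B W X) : FirstOrderCondition μ T ℱ u B X := by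
  have hm : ∀ t ∈ Icc 1 T, Measurable[ℱ t] fun ω => deriv (u t) (X t ω / B t ω) := fun t ht =>
    ((hu_diff t ht).continuous_deriv le_rfl).measurable.comp (hX.measurable_div hB ht)
  have ha : ∀ t ∈ Icc 1 T, Integrable (fun ω => deriv (u t) (X t ω / B t ω)) μ := fun t ht =>
    ((hu_diff t ht).continuous_deriv le_rfl |>.comp_memLp_top (hX.memLp_div hℱle hB ht)).integrable
      le_top
  have hpos : ∀ t ∈ Icc 1 T, 0 < ∫ ω, deriv (u t) (X t ω / B t ω) ∂μ := fun t ht => by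
    rw [integral_pos_iff_support_of_nonneg (fun ω => (hu_deriv t ht _).le) (ha t ht),
      Function.support_eq_univ fun ω => (hu_deriv t ht _).ne']
    simp
  refine ⟨fun t => (∫ ω, deriv (u t) (X t ω / B t ω) ∂μ)⁻¹, fun t ht => inv_pos.2 (hpos t ht),
    fun s hs t ht hst => ?_⟩
  refine (ae_eq_condExp_of_forall_setIntegral_eq (hℱle s) ((ha t ht).const_mul _)
    (fun A _ _ => ((ha s hs).const_mul _).integrableOn) (fun A hA _ => ?_)
    ((hm s hs).const_mul _).stronglyMeasurable.aestronglyMeasurable).symm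
  rw [integral_const_mul, integral_const_mul, inv_mul_eq_div, inv_mul_eq_div,
    div_eq_div_iff (hpos s hs).ne' (hpos t ht).ne']
  linarith [hPO.mul_setIntegral_eq hℱmono hℱle hB hX hu_diff hs ht hst hA]

end ParetoOptimality

theorem paretoOptimal_iff_firstOrderCondition_general
    {Ω : Type*} [mΩ : MeasurableSpace Ω] (μ : Measure Ω) [IsProbabilityMeasure μ]
    (T : ℕ)
    (ℱ : ℕ → MeasurableSpace Ω) (hℱmono : Monotone ℱ) (hℱle : ∀ t, ℱ t ≤ mΩ)
    (r : ℕ → Ω → ℝ)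
    (hr_meas : ∀ t ∈ Finset.Icc 1 T, Measurable[ℱ (t - 1)] (r t))
    (hr_nonneg : ∀ t ∈ Finset.Icc 1 T, ∀ ω, 0 ≤ r t ω)
    (hr_bdd : ∀ t ∈ Finset.Icc 1 T, ∃ C : ℝ, ∀ ω, r t ω ≤ C)
    (B : ℕ → Ω → ℝ) (hB : ∀ t ω, B t ω = ∏ k ∈ Finset.Icc 1 t, (1 + r k ω))
    (u : ℕ → ℝ → ℝ)
    (hu_conc : ∀ t ∈ Finset.Icc 1 T, StrictConcaveOn ℝ (Set.univ : Set ℝ) (u t))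
    (hu_diff : ∀ t ∈ Finset.Icc 1 T, ContDiff ℝ 1 (u t))
    (hu_deriv : ∀ t ∈ Finset.Icc 1 T, ∀ x : ℝ, 0 < deriv (u t) x)
    (W : Ω → ℝ)
    (X : ℕ → Ω → ℝ) (hX : IsAlloc μ T ℱ B W X) :
    (¬ ∃ Y, IsAlloc μ T ℱ B W Y ∧
        (∀ t ∈ Finset.Icc 1 T,
          ∫ ω, u t (X t ω / B t ω) ∂μ ≤ ∫ ω, u t (Y t ω / B t ω) ∂μ) ∧
        (∃ t₀ ∈ Finset.Icc 1 T,
          ∫ ω, u t₀ (X t₀ ω / B t₀ ω) ∂μ < ∫ ω, u t₀ (Y t₀ ω / B t₀ ω) ∂μ)) ↔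
    (∃ lam : ℕ → ℝ, (∀ t ∈ Finset.Icc 1 T, 0 < lam t) ∧
      ∀ s ∈ Finset.Icc 1 T, ∀ t ∈ Finset.Icc 1 T, s ≤ t →
        μ[(fun ω => lam t * deriv (u t) (X t ω / B t ω)) | ℱ s]
          =ᵐ[μ] fun ω => lam s * deriv (u s) (X s ω / B s ω)) := by
  have hdisc := isDiscountFactor_of_eq_prod hℱmono hr_meas hr_nonneg hr_bdd hB
  exact ⟨IsParetoOptimal.firstOrderCondition hℱmono hℱle hdisc hu_diff hu_deriv hX,
    FirstOrderCondition.isParetoOptimal hℱle hdisc (fun t ht => (hu_conc t ht).concaveOn) hu_diff hX⟩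

/-- Characterization of Pareto optimality by a first order condition (Theorem 2.14):
`(X_t) ∈ A(W)` is Pareto optimal iff there is `λ ∈ (0,∞)^T` such that
`(λ_t u_t'(X̃_t))` is an `(F_t)`-martingale. -/
theorem paretoOptimal_iff_firstOrderCondition
    {Ω : Type*} [mΩ : MeasurableSpace Ω] (μ : Measure Ω) [IsProbabilityMeasure μ]
    (T : ℕ) (hT : 1 ≤ T)
    (ℱ : ℕ → MeasurableSpace Ω) (hℱmono : Monotone ℱ) (hℱle : ∀ t, ℱ t ≤ mΩ)
    (r : ℕ → Ω → ℝ)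
    (hr_meas : ∀ t ∈ Finset.Icc 1 T, Measurable[ℱ (t - 1)] (r t))
    (hr_nonneg : ∀ t ∈ Finset.Icc 1 T, ∀ ω, 0 ≤ r t ω)
    (hr_bdd : ∀ t ∈ Finset.Icc 1 T, ∃ C : ℝ, ∀ ω, r t ω ≤ C)
    (B : ℕ → Ω → ℝ) (hB : ∀ t ω, B t ω = ∏ k ∈ Finset.Icc 1 t, (1 + r k ω))
    (u : ℕ → ℝ → ℝ)
    (hu_conc : ∀ t ∈ Finset.Icc 1 T, StrictConcaveOn ℝ (Set.univ : Set ℝ) (u t))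
    (hu_diff : ∀ t ∈ Finset.Icc 1 T, ContDiff ℝ 1 (u t))
    (hu_deriv : ∀ t ∈ Finset.Icc 1 T, ∀ x : ℝ, 0 < deriv (u t) x)
    (W : Ω → ℝ) (hWmeas : Measurable[ℱ T] W) (hWbdd : ∃ C : ℝ, ∀ᵐ ω ∂μ, |W ω| ≤ C)
    (X : ℕ → Ω → ℝ) (hX : IsAlloc μ T ℱ B W X) :
    (¬ ∃ Y, IsAlloc μ T ℱ B W Y ∧
        (∀ t ∈ Finset.Icc 1 T,
          ∫ ω, u t (X t ω / B t ω) ∂μ ≤ ∫ ω, u t (Y t ω / B t ω) ∂μ) ∧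
        (∃ t₀ ∈ Finset.Icc 1 T,
          ∫ ω, u t₀ (X t₀ ω / B t₀ ω) ∂μ < ∫ ω, u t₀ (Y t₀ ω / B t₀ ω) ∂μ)) ↔
    (∃ lam : ℕ → ℝ, (∀ t ∈ Finset.Icc 1 T, 0 < lam t) ∧
      ∀ s ∈ Finset.Icc 1 T, ∀ t ∈ Finset.Icc 1 T, s ≤ t →
        μ[(fun ω => lam t * deriv (u t) (X t ω / B t ω)) | ℱ s]
          =ᵐ[μ] fun ω => lam s * deriv (u s) (X s ω / B s ω)) :=
  paretoOptimal_iff_firstOrderCondition_general (mΩ := mΩ) μ T ℱ hℱmono hℱle r hr_meas hr_nonneg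
    hr_bdd B hB u hu_conc hu_diff hu_deriv W X hX
end
end

section
/- Optimal allocation for exponential utility: for the exponential utility functions u_t(x) = (1/α_t)(1 − exp(−α_t x)) with α ∈ (0,∞)^T, the optimal intertemporal risk allocation (X_t)_{t∈𝕋} ∈ A(W) of W ∈ L^∞ (i.e. the element of A(W) attaining U(W)) exists, is unique, and is determined by exp(−α_t X̃_t) = M_t(α,W) for all t ∈ 𝕋. -/
/-!
The recursion for `L` together with `1/β_t = 1/α_t + 1/β_{t+1}` makes `M` a positive, bounded
martingale, and `∑_t -log M_t / α_t` telescopes to `W`; hence `X̃_t := -log M_t / α_t` is an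
admissible allocation whose marginal utilities `u_t'(X̃_t) = exp(-α_t X̃_t)` equal `M_t`.
For every `Y ∈ A(W)` the martingale property gives `∑_t E[M_t Ỹ_t] = E[W M_T]`, which does not
depend on `Y`. Summing the tangent inequalities `u_t(y) ≤ u_t(x) + u_t'(x)(y - x)` at `x = X̃_t`
therefore shows that `X` is optimal, and strict concavity of `u_t` shows that it is the only
optimum.
-/

open MeasureTheory Finset Real

noncomputable section

lemma exp_utility_lt_tangent {a x y : ℝ} (ha : 0 < a) (hyx : y ≠ x) :
    1 / a * (1 - exp (-a * y)) < 1 / a * (1 - exp (-a * x)) + exp (-a * x) * (y - x) := by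
  have hlt : -(a * (y - x)) + 1 < exp (-(a * (y - x))) :=
    add_one_lt_exp (neg_ne_zero.2 (mul_ne_zero ha.ne' (sub_ne_zero.2 hyx)))
  have hgap : 1 / a * (1 - exp (-a * x)) + exp (-a * x) * (y - x) - 1 / a * (1 - exp (-a * y))
      = exp (-a * x) / a * (exp (-(a * (y - x))) - (-(a * (y - x)) + 1)) := by
    rw [show -a * y = -a * x + -(a * (y - x)) by ring, exp_add]
    field_simp
    ring
  rw [← sub_pos, hgap]
  exact mul_pos (div_pos (exp_pos _) ha) (sub_pos.2 hlt)

def AEBddPos {Ω : Type*} [MeasurableSpace Ω] (μ : Measure Ω) (f : Ω → ℝ) : Prop :=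
  ∃ c C : ℝ, 0 < c ∧ ∀ᵐ ω ∂μ, f ω ∈ Set.Icc c C

section

variable {Ω : Type*} {m mΩ : MeasurableSpace Ω} {μ : Measure Ω} {f g : Ω → ℝ}

lemma aeBddPos_exp (hg : ∃ C, ∀ᵐ ω ∂μ, |g ω| ≤ C) : AEBddPos μ (fun ω => exp (g ω)) := by
  obtain ⟨C, hC⟩ := hg
  refine ⟨exp (-C), exp C, exp_pos _, ?_⟩
  filter_upwards [hC] with ω hω
  exact ⟨exp_le_exp.2 (neg_le_of_abs_le hω), exp_le_exp.2 (le_of_abs_le hω)⟩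

namespace AEBddPos

lemma ae_pos (hf : AEBddPos μ f) : ∀ᵐ ω ∂μ, 0 < f ω := by
  obtain ⟨c, C, hc, h⟩ := hf
  filter_upwards [h] with ω hω using hc.trans_le hω.1

lemma congr (hf : AEBddPos μ f) (hfg : f =ᵐ[μ] g) : AEBddPos μ g := by
  obtain ⟨c, C, hc, h⟩ := hf
  exact ⟨c, C, hc, by filter_upwards [h, hfg] with ω hω hfgω using hfgω ▸ hω⟩

lemma integrable [IsFiniteMeasure μ] (hf : AEBddPos μ f) (hm : AEStronglyMeasurable f μ) :
    Integrable f μ := by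
  obtain ⟨c, C, hc, h⟩ := hf
  refine .of_bound hm C ?_
  filter_upwards [h] with ω hω
  rw [Real.norm_of_nonneg (hc.le.trans hω.1)]
  exact hω.2

lemma exists_abs_log_le (hf : AEBddPos μ f) : ∃ K, ∀ᵐ ω ∂μ, |log (f ω)| ≤ K := by
  obtain ⟨c, C, hc, h⟩ := hf
  refine ⟨max |log c| |log C|, ?_⟩
  filter_upwards [h] with ω hω
  have hlow := log_le_log hc hω.1
  have hhigh := log_le_log (hc.trans_le hω.1) hω.2
  rw [abs_le]
  constructor <;> linarith [neg_abs_le (log c), le_abs_self (log C),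
    le_max_left |log c| |log C|, le_max_right |log c| |log C|]

lemma rpow (hf : AEBddPos μ f) (e : ℝ) : AEBddPos μ (fun ω => f ω ^ e) := by
  obtain ⟨K, hK⟩ := hf.exists_abs_log_le
  refine (aeBddPos_exp (g := fun ω => log (f ω) * e) ⟨K * |e|, ?_⟩).congr ?_
  · filter_upwards [hK] with ω hω
    rw [abs_mul]
    exact mul_le_mul_of_nonneg_right hω (abs_nonneg e)
  · filter_upwards [hf.ae_pos] with ω hω
    rw [rpow_def_of_pos hω]

lemma mul (hf : AEBddPos μ f) (hg : AEBddPos μ g) : AEBddPos μ (fun ω => f ω * g ω) := by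
  obtain ⟨c, C, hc, hf⟩ := hf
  obtain ⟨c', C', hc', hg⟩ := hg
  refine ⟨c * c', C * C', mul_pos hc hc', ?_⟩
  filter_upwards [hf, hg] with ω hfω hgω
  exact ⟨mul_le_mul hfω.1 hgω.1 hc'.le (hc.le.trans hfω.1),
    mul_le_mul hfω.2 hgω.2 (hc'.le.trans hgω.1) ((hc.le.trans hfω.1).trans hfω.2)⟩

lemma prod {ι : Type*} {s : Finset ι} {F : ι → Ω → ℝ} (h : ∀ i ∈ s, AEBddPos μ (F i)) :
    AEBddPos μ (fun ω => ∏ i ∈ s, F i ω) := by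
  classical
  induction s using Finset.induction_on with
  | empty => exact ⟨1, 1, one_pos, .of_forall fun ω => by simp⟩
  | insert i s hi ih =>
    simp only [prod_insert hi]
    exact (h i (mem_insert_self i s)).mul (ih fun j hj => h j (mem_insert_of_mem hj))

lemma condExp [IsFiniteMeasure μ] (hm : m ≤ mΩ) (hf : AEBddPos μ f)
    (hfi : Integrable f μ) : AEBddPos μ (μ[f|m]) := by
  obtain ⟨c, C, hc, h⟩ := hf
  have hlow := condExp_mono (m := m) (integrable_const c) hfi (h.mono fun ω hω => hω.1)
  have hhigh := condExp_mono (m := m) hfi (integrable_const C) (h.mono fun ω hω => hω.2)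
  rw [condExp_const hm] at hlow hhigh
  exact ⟨c, C, hc, by filter_upwards [hlow, hhigh] with ω h1 h2 using ⟨h1, h2⟩⟩

end AEBddPos

end

section Weights

variable {T : ℕ} {α β : ℕ → ℝ}

lemma beta_pos (hα : ∀ t ∈ Icc 1 T, 0 < α t)
    (hβ : ∀ t ∈ Icc 1 T, 1 / β t = ∑ k ∈ Icc t T, 1 / α k) {t : ℕ} (ht : t ∈ Icc 1 T) :
    0 < β t := by
  have hsum : 0 < 1 / β t := by
    rw [hβ t ht]
    refine sum_pos (fun k hk => one_div_pos.2 (hα k ?_)) ⟨t, ?_⟩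
    · simp only [mem_Icc] at ht hk ⊢; omega
    · simp only [mem_Icc] at ht ⊢; omega
  exact one_div_pos.1 hsum

lemma one_div_beta_eq_add (hβ : ∀ t ∈ Icc 1 T, 1 / β t = ∑ k ∈ Icc t T, 1 / α k)
    {s : ℕ} (hs : 1 ≤ s) (hsT : s < T) : 1 / β s = 1 / α s + 1 / β (s + 1) := by
  rw [hβ s (mem_Icc.2 ⟨hs, hsT.le⟩), hβ (s + 1) (mem_Icc.2 ⟨by omega, hsT⟩),
    Icc_eq_cons_Ioc hsT.le, sum_cons, Icc_add_one_left_eq_Ioc]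

lemma sum_one_div_mul_telescope (hT : 1 ≤ T)
    (hβ : ∀ t ∈ Icc 1 T, 1 / β t = ∑ k ∈ Icc t T, 1 / α k) (hβ0 : ∀ t ∈ Icc 1 T, β t ≠ 0)
    (ℓ : ℕ → ℝ) :
    ∑ t ∈ Icc 1 T, 1 / α t * (ℓ t + ∑ k ∈ Icc 1 (t - 1), -(β (k + 1) / α k) * ℓ k)
      = 1 / α T * ℓ T := by
  have hswap : ∑ t ∈ Icc 1 T, ∑ k ∈ Icc 1 (t - 1), 1 / α t * (-(β (k + 1) / α k) * ℓ k)
      = ∑ k ∈ Icc 1 (T - 1), ∑ t ∈ Icc (k + 1) T, 1 / α t * (-(β (k + 1) / α k) * ℓ k) :=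
    sum_comm' fun t k => by simp only [mem_Icc]; omega
  have hcancel : ∀ k ∈ Icc 1 (T - 1),
      ∑ t ∈ Icc (k + 1) T, 1 / α t * (-(β (k + 1) / α k) * ℓ k) = -(1 / α k * ℓ k) := by
    intro k hk
    have hk1 : k + 1 ∈ Icc 1 T := by simp only [mem_Icc] at hk ⊢; omega
    rw [← sum_mul, ← hβ _ hk1]
    field_simp [hβ0 _ hk1]
  obtain ⟨n, rfl⟩ : ∃ n, T = n + 1 := ⟨T - 1, by omega⟩
  calc _ = ∑ t ∈ Icc 1 (n + 1), 1 / α t * ℓ t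
        + ∑ t ∈ Icc 1 (n + 1), ∑ k ∈ Icc 1 (t - 1), 1 / α t * (-(β (k + 1) / α k) * ℓ k) := by
        simp only [mul_add, mul_sum, sum_add_distrib]
    _ = ∑ t ∈ Icc 1 (n + 1), 1 / α t * ℓ t - ∑ k ∈ Icc 1 n, 1 / α k * ℓ k := by
        rw [hswap, sum_congr rfl hcancel, sum_neg_distrib, Nat.add_sub_cancel, sub_eq_add_neg]
    _ = 1 / α (n + 1) * ℓ (n + 1) := by
        rw [sum_Icc_succ_top (by omega)]
        ring

end Weights

section AEStronglyMeasurable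

variable {Ω : Type*} {m mΩ : MeasurableSpace Ω} {μ : Measure Ω}

lemma MeasureTheory.AEStronglyMeasurable.rpow_const {f : Ω → ℝ}
    (hf : AEStronglyMeasurable[m] f μ) (e : ℝ) : AEStronglyMeasurable[m] (fun ω => f ω ^ e) μ :=
  ⟨fun ω => hf.mk f ω ^ e, (hf.stronglyMeasurable_mk.measurable.pow_const e).stronglyMeasurable,
    hf.ae_eq_mk.fun_comp (· ^ e)⟩

lemma MeasureTheory.AEStronglyMeasurable.finset_prod {ι : Type*} {s : Finset ι} {F : ι → Ω → ℝ}
    (h : ∀ i ∈ s, AEStronglyMeasurable[m] (F i) μ) :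
    AEStronglyMeasurable[m] (fun ω => ∏ i ∈ s, F i ω) μ := by
  classical
  induction s using Finset.induction_on with
  | empty => simpa using stronglyMeasurable_const.aestronglyMeasurable
  | insert i s hi ih =>
    simp only [prod_insert hi]
    exact (h i (mem_insert_self i s)).mul (ih fun j hj => h j (mem_insert_of_mem hj))

end AEStronglyMeasurable

section Martingale

variable {Ω : Type*} [mΩ : MeasurableSpace Ω] {μ : Measure Ω} {ℱ : ℕ → MeasurableSpace Ω}

lemma ae_eq_condExp_of_condExp_succ [IsFiniteMeasure μ] (hℱmono : Monotone ℱ)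
    (hℱle : ∀ t, ℱ t ≤ mΩ) {N : ℕ → Ω → ℝ} {a T : ℕ}
    (hNT : AEStronglyMeasurable[ℱ T] (N T) μ) (hNTi : Integrable (N T) μ)
    (hstep : ∀ s, a ≤ s → s < T → μ[N (s + 1)|ℱ s] =ᵐ[μ] N s) {t : ℕ} (hat : a ≤ t)
    (htT : t ≤ T) : N t =ᵐ[μ] μ[N T|ℱ t] := by
  induction htT using Nat.decreasingInduction with
  | self => exact (condExp_of_aestronglyMeasurable' (hℱle T) hNT hNTi).symm
  | of_succ k hkT ih =>
    calc N k =ᵐ[μ] μ[N (k + 1)|ℱ k] := (hstep k hat hkT).symm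
      _ =ᵐ[μ] μ[μ[N T|ℱ (k + 1)]|ℱ k] := condExp_congr_ae (ih (by omega))
      _ =ᵐ[μ] μ[N T|ℱ k] := condExp_condExp_of_le (hℱmono k.le_succ) (hℱle _)

end Martingale

section ProdLPow

variable {Ω : Type*} {α β : ℕ → ℝ} {L : ℕ → Ω → ℝ}

def prodLPow (α β : ℕ → ℝ) (L : ℕ → Ω → ℝ) (s : ℕ) (ω : Ω) : ℝ :=
  ∏ k ∈ Icc 1 s, L k ω ^ (-(β (k + 1) / α k))

lemma prodLPow_succ (s : ℕ) (ω : Ω) :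
    prodLPow α β L (s + 1) ω = prodLPow α β L s ω * L (s + 1) ω ^ (-(β (s + 2) / α (s + 1))) :=
  prod_Icc_succ_top (by omega) _

lemma prodLPow_pos {s : ℕ} {ω : Ω} (hpos : ∀ k ∈ Icc 1 s, 0 < L k ω) :
    0 < prodLPow α β L s ω :=
  prod_pos fun k hk => rpow_pos_of_pos (hpos k hk) _

lemma log_prodLPow {s : ℕ} {ω : Ω} (hpos : ∀ k ∈ Icc 1 s, 0 < L k ω) :
    log (prodLPow α β L s ω) = ∑ k ∈ Icc 1 s, -(β (k + 1) / α k) * log (L k ω) := by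
  rw [prodLPow, log_prod fun k hk => (rpow_pos_of_pos (hpos k hk) _).ne']
  exact sum_congr rfl fun k hk => log_rpow (hpos k hk) _

end ProdLPow

section Deflator

variable {Ω : Type*} [mΩ : MeasurableSpace Ω] {μ : Measure Ω} {ℱ : ℕ → MeasurableSpace Ω}
  {T : ℕ} {α β : ℕ → ℝ} {W : Ω → ℝ} {L M : ℕ → Ω → ℝ}

lemma L_aestronglyMeasurable_aeBddPos [IsFiniteMeasure μ] (hℱle : ∀ t, ℱ t ≤ mΩ)
    (hWmeas : Measurable[ℱ T] W) (hWbdd : ∃ C : ℝ, ∀ᵐ ω ∂μ, |W ω| ≤ C)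
    (hLT : L T =ᵐ[μ] fun ω => exp (-(α T) * W ω))
    (hLstep : ∀ t ∈ Icc 2 T,
      L (t - 1) =ᵐ[μ] fun ω => ((μ[L t | ℱ (t - 1)]) ω) ^ (β (t - 1) / β t))
    {t : ℕ} (ht : t ∈ Icc 1 T) : AEStronglyMeasurable[ℱ t] (L t) μ ∧ AEBddPos μ (L t) := by
  obtain ⟨ht1, htT⟩ := mem_Icc.1 ht
  induction htT using Nat.decreasingInduction with
  | self =>
    refine ⟨((hWmeas.const_mul _).exp.stronglyMeasurable.aestronglyMeasurable).congr hLT.symm,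
      (aeBddPos_exp ?_).congr hLT.symm⟩
    obtain ⟨C, hC⟩ := hWbdd
    refine ⟨|α T| * C, ?_⟩
    filter_upwards [hC] with ω hω
    rw [abs_mul, abs_neg]
    exact mul_le_mul_of_nonneg_left hω (abs_nonneg _)
  | of_succ k hkT ih =>
    obtain ⟨hmeas, hbdd⟩ := ih (mem_Icc.2 ⟨by omega, hkT⟩) (by omega)
    have hstep := hLstep (k + 1) (mem_Icc.2 ⟨by omega, hkT⟩)
    simp only [Nat.add_sub_cancel] at hstep
    exact ⟨(stronglyMeasurable_condExp.aestronglyMeasurable.rpow_const _).congr hstep.symm,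
      ((hbdd.condExp (hℱle k) (hbdd.integrable (hmeas.mono (hℱle _)))).rpow _).congr hstep.symm⟩

lemma condExp_L_succ_ae_eq [IsFiniteMeasure μ] (hℱle : ∀ t, ℱ t ≤ mΩ)
    (hL : ∀ t ∈ Icc 1 T, AEStronglyMeasurable[ℱ t] (L t) μ ∧ AEBddPos μ (L t))
    (hLstep : ∀ t ∈ Icc 2 T,
      L (t - 1) =ᵐ[μ] fun ω => ((μ[L t | ℱ (t - 1)]) ω) ^ (β (t - 1) / β t))
    (hβ0 : ∀ t ∈ Icc 1 T, β t ≠ 0) {s : ℕ} (hs : 1 ≤ s) (hsT : s < T) :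
    μ[L (s + 1)|ℱ s] =ᵐ[μ] fun ω => L s ω ^ (β (s + 1) / β s) := by
  obtain ⟨hmeas, hbdd⟩ := hL (s + 1) (mem_Icc.2 ⟨by omega, hsT⟩)
  have hstep := hLstep (s + 1) (mem_Icc.2 ⟨by omega, hsT⟩)
  simp only [Nat.add_sub_cancel] at hstep
  have hinv : β s / β (s + 1) * (β (s + 1) / β s) = 1 := by
    field_simp [hβ0 s (mem_Icc.2 ⟨hs, hsT.le⟩), hβ0 (s + 1) (mem_Icc.2 ⟨by omega, hsT⟩)]
  filter_upwards [(hbdd.condExp (hℱle s) (hbdd.integrable (hmeas.mono (hℱle _)))).ae_pos,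
    hstep] with ω hpos hω
  rw [hω, ← rpow_mul hpos.le, hinv, rpow_one]

lemma prodLPow_aestronglyMeasurable_aeBddPos (hℱmono : Monotone ℱ)
    (hL : ∀ t ∈ Icc 1 T, AEStronglyMeasurable[ℱ t] (L t) μ ∧ AEBddPos μ (L t))
    {s : ℕ} (hsT : s ≤ T) :
    AEStronglyMeasurable[ℱ s] (prodLPow α β L s) μ ∧ AEBddPos μ (prodLPow α β L s) := by
  have hL' : ∀ k ∈ Icc 1 s, AEStronglyMeasurable[ℱ s] (L k) μ ∧ AEBddPos μ (L k) := by
    intro k hk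
    obtain ⟨hk1, hks⟩ := mem_Icc.1 hk
    obtain ⟨hmeas, hbdd⟩ := hL k (mem_Icc.2 ⟨hk1, hks.trans hsT⟩)
    exact ⟨hmeas.mono (hℱmono hks), hbdd⟩
  exact ⟨AEStronglyMeasurable.finset_prod fun k hk => (hL' k hk).1.rpow_const _,
    AEBddPos.prod fun k hk => (hL' k hk).2.rpow _⟩

lemma M_ae_eq_mul_prodLPow (hM1 : M 1 =ᵐ[μ] L 1)
    (hMt : ∀ t ∈ Icc 2 T,
      M t =ᵐ[μ] fun ω => L t ω * ∏ k ∈ Icc 1 (t - 1), (L k ω) ^ (-(β (k + 1) / α k)))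
    {t : ℕ} (ht : t ∈ Icc 1 T) : M t =ᵐ[μ] fun ω => L t ω * prodLPow α β L (t - 1) ω := by
  obtain rfl | ht1 := eq_or_ne t 1
  · filter_upwards [hM1] with ω hω
    simp [prodLPow, hω]
  · exact hMt t (by simp only [mem_Icc] at ht ⊢; omega)

lemma M_aestronglyMeasurable_aeBddPos (hℱmono : Monotone ℱ)
    (hL : ∀ t ∈ Icc 1 T, AEStronglyMeasurable[ℱ t] (L t) μ ∧ AEBddPos μ (L t))
    (hM : ∀ t ∈ Icc 1 T, M t =ᵐ[μ] fun ω => L t ω * prodLPow α β L (t - 1) ω)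
    {t : ℕ} (ht : t ∈ Icc 1 T) : AEStronglyMeasurable[ℱ t] (M t) μ ∧ AEBddPos μ (M t) := by
  obtain ⟨hPm, hPb⟩ :=
    prodLPow_aestronglyMeasurable_aeBddPos (α := α) (β := β) hℱmono hL (s := t - 1)
      (by simp only [mem_Icc] at ht; omega)
  exact ⟨((hL t ht).1.mul (hPm.mono (hℱmono (Nat.sub_le t 1)))).congr (hM t ht).symm,
    ((hL t ht).2.mul hPb).congr (hM t ht).symm⟩

lemma condExp_M_succ_ae_eq [IsFiniteMeasure μ] (hℱmono : Monotone ℱ) (hℱle : ∀ t, ℱ t ≤ mΩ)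
    (hα : ∀ t ∈ Icc 1 T, 0 < α t)
    (hβ : ∀ t ∈ Icc 1 T, 1 / β t = ∑ k ∈ Icc t T, 1 / α k)
    (hL : ∀ t ∈ Icc 1 T, AEStronglyMeasurable[ℱ t] (L t) μ ∧ AEBddPos μ (L t))
    (hLstep : ∀ t ∈ Icc 2 T,
      L (t - 1) =ᵐ[μ] fun ω => ((μ[L t | ℱ (t - 1)]) ω) ^ (β (t - 1) / β t))
    (hM : ∀ t ∈ Icc 1 T, M t =ᵐ[μ] fun ω => L t ω * prodLPow α β L (t - 1) ω)
    {s : ℕ} (hs : 1 ≤ s) (hsT : s < T) : μ[M (s + 1)|ℱ s] =ᵐ[μ] M s := by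
  have hsm : s ∈ Icc 1 T := mem_Icc.2 ⟨hs, hsT.le⟩
  have hs1 : s + 1 ∈ Icc 1 T := mem_Icc.2 ⟨by omega, hsT⟩
  obtain ⟨hPm, hPb⟩ := prodLPow_aestronglyMeasurable_aeBddPos (α := α) (β := β) hℱmono hL hsT.le
  obtain ⟨hLm, hLb⟩ := hL (s + 1) hs1
  have hpull : μ[M (s + 1)|ℱ s] =ᵐ[μ] prodLPow α β L s * μ[L (s + 1)|ℱ s] := by
    have hM : M (s + 1) =ᵐ[μ] prodLPow α β L s * L (s + 1) := by
      filter_upwards [hM _ hs1] with ω hω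
      rw [hω, Nat.add_sub_cancel, mul_comm, Pi.mul_apply]
    exact (condExp_congr_ae hM).trans (condExp_mul_of_aestronglyMeasurable_left hPm
      ((hPb.mul hLb).integrable ((hPm.mono (hℱle s)).mul (hLm.mono (hℱle _))))
      (hLb.integrable (hLm.mono (hℱle _))))
  have hexp : -(β (s + 1) / α s) + β (s + 1) / β s = 1 := by
    calc -(β (s + 1) / α s) + β (s + 1) / β s = β (s + 1) * (1 / β s - 1 / α s) := by ring
      _ = β (s + 1) * (1 / β (s + 1)) := by rw [one_div_beta_eq_add hβ hs hsT]; ring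
      _ = 1 := mul_one_div_cancel (beta_pos hα hβ hs1).ne'
  obtain ⟨n, rfl⟩ : ∃ n, s = n + 1 := ⟨s - 1, by omega⟩
  filter_upwards [hpull, condExp_L_succ_ae_eq hℱle hL hLstep (fun t ht => (beta_pos hα hβ ht).ne')
    hs hsT, hM _ hsm, (hL _ hsm).2.ae_pos] with ω hpullω hLω hMω hpos
  rw [hpullω, hMω, Pi.mul_apply, hLω, prodLPow_succ, mul_assoc, ← rpow_add hpos, hexp, rpow_one,
    Nat.add_sub_cancel, mul_comm]

lemma sum_neg_log_M_div_eq (hT : 1 ≤ T) (hα : ∀ t ∈ Icc 1 T, 0 < α t)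
    (hβ : ∀ t ∈ Icc 1 T, 1 / β t = ∑ k ∈ Icc t T, 1 / α k)
    (hL : ∀ t ∈ Icc 1 T, AEBddPos μ (L t))
    (hLT : L T =ᵐ[μ] fun ω => exp (-(α T) * W ω))
    (hM : ∀ t ∈ Icc 1 T, M t =ᵐ[μ] fun ω => L t ω * prodLPow α β L (t - 1) ω) :
    ∀ᵐ ω ∂μ, ∑ t ∈ Icc 1 T, -log (M t ω) / α t = W ω := by
  have hpos : ∀ᵐ ω ∂μ, ∀ k ∈ Icc 1 T, 0 < L k ω :=
    (Filter.eventually_all_finset _).2 fun k hk => (hL k hk).ae_pos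
  filter_upwards [hpos, (Filter.eventually_all_finset _).2 hM, hLT] with ω hposω hMω hLTω
  have hlog : ∀ t ∈ Icc 1 T, -log (M t ω) / α t
      = -(1 / α t * (log (L t ω) + ∑ k ∈ Icc 1 (t - 1), -(β (k + 1) / α k) * log (L k ω))) := by
    intro t ht
    have hpast : ∀ k ∈ Icc 1 (t - 1), 0 < L k ω := fun k hk =>
      hposω k (by simp only [mem_Icc] at ht hk ⊢; omega)
    rw [hMω t ht, log_mul (hposω t ht).ne' (prodLPow_pos hpast).ne', log_prodLPow hpast]
    ring
  rw [sum_congr rfl hlog, sum_neg_distrib,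
    sum_one_div_mul_telescope hT hβ (fun t ht => (beta_pos hα hβ ht).ne'), hLTω, log_exp]
  field_simp [(hα T (mem_Icc.2 ⟨hT, le_rfl⟩)).ne']

end Deflator

section Discount

variable {Ω : Type*} {r B : ℕ → Ω → ℝ} {T : ℕ}

lemma one_le_B (hr_nonneg : ∀ t ∈ Icc 1 T, ∀ ω, 0 ≤ r t ω)
    (hB : ∀ t ω, B t ω = ∏ k ∈ Icc 1 t, (1 + r k ω)) {t : ℕ} (ht : t ∈ Icc 1 T) (ω : Ω) :
    1 ≤ B t ω := by
  rw [hB]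
  refine one_le_prod fun k hk => ?_
  have := hr_nonneg k (by simp only [mem_Icc] at ht hk ⊢; omega) ω
  linarith

lemma exists_B_le (hr_nonneg : ∀ t ∈ Icc 1 T, ∀ ω, 0 ≤ r t ω)
    (hr_bdd : ∀ t ∈ Icc 1 T, ∃ C : ℝ, ∀ ω, r t ω ≤ C)
    (hB : ∀ t ω, B t ω = ∏ k ∈ Icc 1 t, (1 + r k ω)) {t : ℕ} (ht : t ∈ Icc 1 T) :
    ∃ C, ∀ ω, B t ω ≤ C := by
  choose! C hC using hr_bdd
  have hk : ∀ k ∈ Icc 1 t, k ∈ Icc 1 T := fun k hk => by simp only [mem_Icc] at ht hk ⊢; omega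
  refine ⟨∏ k ∈ Icc 1 t, (1 + C k), fun ω => ?_⟩
  rw [hB]
  exact prod_le_prod (fun k hk' => by linarith [hr_nonneg k (hk k hk') ω])
    fun k hk' => by linarith [hC k (hk k hk') ω]

lemma measurable_B [MeasurableSpace Ω] {ℱ : ℕ → MeasurableSpace Ω} (hℱmono : Monotone ℱ)
    (hr_meas : ∀ t ∈ Icc 1 T, Measurable[ℱ (t - 1)] (r t))
    (hB : ∀ t ω, B t ω = ∏ k ∈ Icc 1 t, (1 + r k ω)) {t : ℕ} (ht : t ∈ Icc 1 T) :
    Measurable[ℱ t] (B t) := by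
  rw [funext (hB t)]
  refine Finset.measurable_fun_prod _ fun k hk => measurable_const.add ?_
  obtain ⟨hk1, hkt⟩ := mem_Icc.1 hk
  exact (hr_meas k (by simp only [mem_Icc] at ht ⊢; omega)).mono (hℱmono (by omega)) le_rfl

end Discount

def IsOptimalAlloc {Ω : Type*} [MeasurableSpace Ω] (μ : Measure Ω) (T : ℕ)
    (ℱ : ℕ → MeasurableSpace Ω) (u : ℕ → ℝ → ℝ) (B : ℕ → Ω → ℝ) (W : Ω → ℝ)
    (X : ℕ → Ω → ℝ) : Prop :=
  IsAlloc μ T ℱ B W X ∧ ∀ Y, IsAlloc μ T ℱ B W Y → allocVal μ T u B Y ≤ allocVal μ T u B X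

def supergradientGap {Ω : Type*} (u : ℕ → ℝ → ℝ) (M B X Y : ℕ → Ω → ℝ) (t : ℕ) (ω : Ω) : ℝ :=
  u t (X t ω / B t ω) + M t ω * (Y t ω / B t ω - X t ω / B t ω) - u t (Y t ω / B t ω)

section Optimality

variable {Ω : Type*} [mΩ : MeasurableSpace Ω] {μ : Measure Ω} {ℱ : ℕ → MeasurableSpace Ω}
  {T : ℕ} {B : ℕ → Ω → ℝ} {W : Ω → ℝ} {u : ℕ → ℝ → ℝ} {M X Y : ℕ → Ω → ℝ}

lemma integrable_comp_of_continuous [IsFiniteMeasure μ] {φ : ℝ → ℝ} (hφ : Continuous φ)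
    {Z : Ω → ℝ} (hZm : AEStronglyMeasurable Z μ) (hZ : ∃ C, ∀ᵐ ω ∂μ, |Z ω| ≤ C) :
    Integrable (fun ω => φ (Z ω)) μ := by
  obtain ⟨C, hC⟩ := hZ
  obtain ⟨K, hK⟩ := (isCompact_Icc (a := -C) (b := C)).exists_bound_of_continuousOn hφ.continuousOn
  refine .of_bound (hφ.comp_aestronglyMeasurable hZm) K ?_
  filter_upwards [hC] with ω hω using hK _ (abs_le.1 hω)

namespace IsAlloc

lemma discounted (hB1 : ∀ t ∈ Icc 1 T, ∀ ω, 1 ≤ B t ω)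
    (hBm : ∀ t ∈ Icc 1 T, Measurable[ℱ t] (B t)) (hY : IsAlloc μ T ℱ B W Y) {t : ℕ}
    (ht : t ∈ Icc 1 T) :
    Measurable[ℱ t] (fun ω => Y t ω / B t ω) ∧ ∃ C, ∀ᵐ ω ∂μ, |Y t ω / B t ω| ≤ C := by
  obtain ⟨hYm, C, hC⟩ := hY.1 t ht
  refine ⟨hYm.div (hBm t ht), C, ?_⟩
  filter_upwards [hC] with ω hω
  rw [abs_div, abs_of_pos (one_pos.trans_le (hB1 t ht ω))]
  exact (div_le_self (abs_nonneg _) (hB1 t ht ω)).trans hω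

lemma integrable_utility [IsFiniteMeasure μ] (hℱle : ∀ t, ℱ t ≤ mΩ)
    (hB1 : ∀ t ∈ Icc 1 T, ∀ ω, 1 ≤ B t ω) (hBm : ∀ t ∈ Icc 1 T, Measurable[ℱ t] (B t))
    (hu : ∀ t ∈ Icc 1 T, Continuous (u t)) (hY : IsAlloc μ T ℱ B W Y) {t : ℕ}
    (ht : t ∈ Icc 1 T) : Integrable (fun ω => u t (Y t ω / B t ω)) μ :=
  have ⟨hZm, hZ⟩ := hY.discounted hB1 hBm ht
  integrable_comp_of_continuous (hu t ht) (hZm.mono (hℱle t) le_rfl).aestronglyMeasurable hZ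

lemma integrable_mul_discounted (hℱle : ∀ t, ℱ t ≤ mΩ)
    (hB1 : ∀ t ∈ Icc 1 T, ∀ ω, 1 ≤ B t ω) (hBm : ∀ t ∈ Icc 1 T, Measurable[ℱ t] (B t))
    {N : Ω → ℝ} (hN : Integrable N μ) (hY : IsAlloc μ T ℱ B W Y) {t : ℕ} (ht : t ∈ Icc 1 T) :
    Integrable (fun ω => Y t ω / B t ω * N ω) μ :=
  have ⟨hZm, C, hC⟩ := hY.discounted hB1 hBm ht
  hN.bdd_mul (hZm.mono (hℱle t) le_rfl).aestronglyMeasurable (c := C) hC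

lemma sum_integral_mul_discounted [IsFiniteMeasure μ] (hℱle : ∀ t, ℱ t ≤ mΩ)
    (hB1 : ∀ t ∈ Icc 1 T, ∀ ω, 1 ≤ B t ω) (hBm : ∀ t ∈ Icc 1 T, Measurable[ℱ t] (B t))
    (hMT : Integrable (M T) μ) (hM : ∀ t ∈ Icc 1 T, M t =ᵐ[μ] μ[M T|ℱ t])
    (hY : IsAlloc μ T ℱ B W Y) :
    ∑ t ∈ Icc 1 T, ∫ ω, M t ω * (Y t ω / B t ω) ∂μ = ∫ ω, W ω * M T ω ∂μ := by
  have hterm : ∀ t ∈ Icc 1 T,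
      ∫ ω, M t ω * (Y t ω / B t ω) ∂μ = ∫ ω, Y t ω / B t ω * M T ω ∂μ := by
    intro t ht
    obtain ⟨hZm, C, hC⟩ := hY.discounted hB1 hBm ht
    have hpull := condExp_stronglyMeasurable_mul_of_bound (hℱle t) hZm.stronglyMeasurable hMT C hC
    calc ∫ ω, M t ω * (Y t ω / B t ω) ∂μ
        = ∫ ω, μ[(fun ω => Y t ω / B t ω) * M T|ℱ t] ω ∂μ := by
          refine integral_congr_ae ?_
          filter_upwards [hM t ht, hpull] with ω hMω hpullω
          rw [hMω, hpullω, Pi.mul_apply, mul_comm]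
      _ = ∫ ω, Y t ω / B t ω * M T ω ∂μ := integral_condExp (hℱle t)
  rw [sum_congr rfl hterm,
    ← integral_finsetSum _ fun t ht => hY.integrable_mul_discounted hℱle hB1 hBm hMT ht]
  refine integral_congr_ae ?_
  filter_upwards [hY.2] with ω hω
  rw [← sum_mul, hω]

end IsAlloc

lemma sum_integral_supergradientGap [IsFiniteMeasure μ] (hℱle : ∀ t, ℱ t ≤ mΩ)
    (hB1 : ∀ t ∈ Icc 1 T, ∀ ω, 1 ≤ B t ω) (hBm : ∀ t ∈ Icc 1 T, Measurable[ℱ t] (B t))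
    (hu : ∀ t ∈ Icc 1 T, Continuous (u t))
    (hMT : Integrable (M T) μ) (hM : ∀ t ∈ Icc 1 T, M t =ᵐ[μ] μ[M T|ℱ t])
    (hX : IsAlloc μ T ℱ B W X) (hY : IsAlloc μ T ℱ B W Y) :
    (∀ t ∈ Icc 1 T, Integrable (supergradientGap u M B X Y t) μ) ∧
      ∑ t ∈ Icc 1 T, ∫ ω, supergradientGap u M B X Y t ω ∂μ
        = allocVal μ T u B X - allocVal μ T u B Y := by
  have hMZ : ∀ Z, IsAlloc μ T ℱ B W Z → ∀ t ∈ Icc 1 T,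
      Integrable (fun ω => M t ω * (Z t ω / B t ω)) μ := fun Z hZ t ht =>
    (hZ.integrable_mul_discounted hℱle hB1 hBm (integrable_condExp.congr (hM t ht).symm) ht).congr
      (.of_forall fun ω => mul_comm _ _)
  have hgap : ∀ t, supergradientGap u M B X Y t
      = (fun ω => u t (X t ω / B t ω)) + ((fun ω => M t ω * (Y t ω / B t ω))
        - fun ω => M t ω * (X t ω / B t ω)) - fun ω => u t (Y t ω / B t ω) :=
    fun t => funext fun ω => by simp only [supergradientGap, Pi.add_apply, Pi.sub_apply]; ring
  have hint : ∀ t ∈ Icc 1 T, Integrable (supergradientGap u M B X Y t) μ := fun t ht => by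
    rw [hgap t]
    exact ((hX.integrable_utility hℱle hB1 hBm hu ht).add ((hMZ Y hY t ht).sub (hMZ X hX t ht))).sub
      (hY.integrable_utility hℱle hB1 hBm hu ht)
  refine ⟨hint, ?_⟩
  have hsplit : ∀ t ∈ Icc 1 T, ∫ ω, supergradientGap u M B X Y t ω ∂μ
      = ∫ ω, u t (X t ω / B t ω) ∂μ + (∫ ω, M t ω * (Y t ω / B t ω) ∂μ
        - ∫ ω, M t ω * (X t ω / B t ω) ∂μ) - ∫ ω, u t (Y t ω / B t ω) ∂μ := fun t ht => by
    have hUX := hX.integrable_utility hℱle hB1 hBm hu ht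
    have hMdiff := (hMZ Y hY t ht).sub (hMZ X hX t ht)
    rw [hgap t, integral_sub' (hUX.add hMdiff) (hY.integrable_utility hℱle hB1 hBm hu ht),
      integral_add' hUX hMdiff, integral_sub' (hMZ Y hY t ht) (hMZ X hX t ht)]
  rw [sum_congr rfl hsplit, sum_sub_distrib, sum_add_distrib, sum_sub_distrib,
    hY.sum_integral_mul_discounted hℱle hB1 hBm hMT hM,
    hX.sum_integral_mul_discounted hℱle hB1 hBm hMT hM, allocVal, allocVal]
  ring

theorem isOptimalAlloc_of_supergradient [IsFiniteMeasure μ] (hℱle : ∀ t, ℱ t ≤ mΩ)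
    (hB1 : ∀ t ∈ Icc 1 T, ∀ ω, 1 ≤ B t ω) (hBm : ∀ t ∈ Icc 1 T, Measurable[ℱ t] (B t))
    (hu : ∀ t ∈ Icc 1 T, Continuous (u t))
    (hMT : Integrable (M T) μ) (hM : ∀ t ∈ Icc 1 T, M t =ᵐ[μ] μ[M T|ℱ t])
    (hX : IsAlloc μ T ℱ B W X)
    (hgrad : ∀ t ∈ Icc 1 T, ∀ᵐ ω ∂μ, ∀ y, y ≠ X t ω / B t ω →
      u t y < u t (X t ω / B t ω) + M t ω * (y - X t ω / B t ω)) :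
    IsOptimalAlloc μ T ℱ u B W X ∧
      ∀ X', IsOptimalAlloc μ T ℱ u B W X' → ∀ t ∈ Icc 1 T, X' t =ᵐ[μ] X t := by
  have hgap := fun Y (hY : IsAlloc μ T ℱ B W Y) =>
    sum_integral_supergradientGap hℱle hB1 hBm hu hMT hM hX hY
  have hnonneg : ∀ Y, ∀ t ∈ Icc 1 T, 0 ≤ᵐ[μ] supergradientGap u M B X Y t := by
    intro Y t ht
    filter_upwards [hgrad t ht] with ω hω
    rcases eq_or_ne (Y t ω / B t ω) (X t ω / B t ω) with h | h
    · simp [supergradientGap, h]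
    · have := hω _ h
      simp only [Pi.zero_apply, supergradientGap]
      linarith
  have hopt : IsOptimalAlloc μ T ℱ u B W X := by
    refine ⟨hX, fun Y hY => sub_nonneg.1 ?_⟩
    rw [← (hgap Y hY).2]
    exact sum_nonneg fun t ht => integral_nonneg_of_ae (hnonneg Y t ht)
  refine ⟨hopt, fun X' hX' t ht => ?_⟩
  obtain ⟨hint, hsum⟩ := hgap X' hX'.1
  rw [le_antisymm (hopt.2 X' hX'.1) (hX'.2 X hX), sub_self,
    sum_eq_zero_iff_of_nonneg fun s hs => integral_nonneg_of_ae (hnonneg X' s hs)] at hsum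
  have hzero := (integral_eq_zero_iff_of_nonneg_ae (hnonneg X' t ht) (hint t ht)).1 (hsum t ht)
  filter_upwards [hzero, hgrad t ht] with ω h0 hω
  have hdisc : X' t ω / B t ω = X t ω / B t ω := by
    by_contra hne
    have := hω _ hne
    simp only [Pi.zero_apply, supergradientGap] at h0
    linarith
  exact (div_left_inj' (one_pos.trans_le (hB1 t ht ω)).ne').1 hdisc

lemma exists_isAlloc_exp_eq {α : ℕ → ℝ} (hα : ∀ t ∈ Icc 1 T, 0 < α t)
    (hB1 : ∀ t ∈ Icc 1 T, ∀ ω, 1 ≤ B t ω) (hBm : ∀ t ∈ Icc 1 T, Measurable[ℱ t] (B t))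
    (hBbdd : ∀ t ∈ Icc 1 T, ∃ C, ∀ ω, B t ω ≤ C)
    (hMb : ∀ t ∈ Icc 1 T, AEBddPos μ (M t)) (hM : ∀ t ∈ Icc 1 T, M t =ᵐ[μ] μ[M T|ℱ t])
    (hsum : ∀ᵐ ω ∂μ, ∑ t ∈ Icc 1 T, -log (M t ω) / α t = W ω) :
    ∃ X, IsAlloc μ T ℱ B W X ∧
      ∀ t ∈ Icc 1 T, ∀ᵐ ω ∂μ, exp (-(α t) * (X t ω / B t ω)) = M t ω := by
  -- `μ[M T|ℱ t]` is an `ℱ t`-measurable version of `M t`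
  have hdisc : ∀ t ∈ Icc 1 T, ∀ ω, B t ω * (-log (μ[M T|ℱ t] ω) / α t) / B t ω
      = -log (μ[M T|ℱ t] ω) / α t := fun t ht ω =>
    mul_div_cancel_left₀ _ (one_pos.trans_le (hB1 t ht ω)).ne'
  refine ⟨fun t ω => B t ω * (-log (μ[M T|ℱ t] ω) / α t), ⟨fun t ht => ⟨?_, ?_⟩, ?_⟩,
    fun t ht => ?_⟩
  · exact (hBm t ht).mul (stronglyMeasurable_condExp.measurable.log.neg.div_const _)
  · obtain ⟨C, hC⟩ := hBbdd t ht
    obtain ⟨K, hK⟩ := ((hMb t ht).congr (hM t ht)).exists_abs_log_le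
    refine ⟨C * (K / α t), ?_⟩
    filter_upwards [hK] with ω hω
    rw [abs_mul, abs_of_pos (one_pos.trans_le (hB1 t ht ω)), abs_div, abs_neg,
      abs_of_pos (hα t ht)]
    exact mul_le_mul (hC ω) (div_le_div_of_nonneg_right hω (hα t ht).le)
      (div_nonneg (abs_nonneg _) (hα t ht).le)
      (by linarith [hB1 t ht ω, hC ω])
  · filter_upwards [hsum, (Filter.eventually_all_finset _).2 hM] with ω hω hMω
    rw [← hω]
    exact sum_congr rfl fun t ht => by rw [hdisc t ht, hMω t ht]
  · filter_upwards [hM t ht, (hMb t ht).ae_pos] with ω hω hpos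
    have hlog : -α t * (-log (M t ω) / α t) = log (M t ω) := by field_simp [(hα t ht).ne']
    rw [hdisc t ht, ← hω, hlog, exp_log hpos]

end Optimality

/-- Optimal allocation for exponential utility (Theorem 3.2): for
`u_t(x) = (1/α_t)(1 - exp(-α_t x))`, the optimal allocation of `W` exists, is
unique, and is determined by `exp(-α_t X̃_t) = M_t(α,W)`. -/
theorem exponential_optimal_allocation
    {Ω : Type*} [mΩ : MeasurableSpace Ω] (μ : Measure Ω) [IsProbabilityMeasure μ]
    (T : ℕ) (hT : 1 ≤ T)
    (ℱ : ℕ → MeasurableSpace Ω) (hℱmono : Monotone ℱ) (hℱle : ∀ t, ℱ t ≤ mΩ)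
    (r : ℕ → Ω → ℝ)
    (hr_meas : ∀ t ∈ Finset.Icc 1 T, Measurable[ℱ (t - 1)] (r t))
    (hr_nonneg : ∀ t ∈ Finset.Icc 1 T, ∀ ω, 0 ≤ r t ω)
    (hr_bdd : ∀ t ∈ Finset.Icc 1 T, ∃ C : ℝ, ∀ ω, r t ω ≤ C)
    (B : ℕ → Ω → ℝ) (hB : ∀ t ω, B t ω = ∏ k ∈ Finset.Icc 1 t, (1 + r k ω))
    (α β : ℕ → ℝ) (hα : ∀ t ∈ Finset.Icc 1 T, 0 < α t)
    (hβ : ∀ t ∈ Finset.Icc 1 T, 1 / β t = ∑ k ∈ Finset.Icc t T, 1 / α k)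
    (W : Ω → ℝ) (hWmeas : Measurable[ℱ T] W) (hWbdd : ∃ C : ℝ, ∀ᵐ ω ∂μ, |W ω| ≤ C)
    (L M : ℕ → Ω → ℝ)
    (hLT : L T =ᵐ[μ] fun ω => Real.exp (-(α T) * W ω))
    (hLstep : ∀ t ∈ Finset.Icc 2 T,
      L (t - 1) =ᵐ[μ] fun ω => ((μ[L t | ℱ (t - 1)]) ω) ^ (β (t - 1) / β t))
    (hM1 : M 1 =ᵐ[μ] L 1)
    (hMt : ∀ t ∈ Finset.Icc 2 T,
      M t =ᵐ[μ] fun ω =>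
        L t ω * ∏ k ∈ Finset.Icc 1 (t - 1), (L k ω) ^ (-(β (k + 1) / α k)))
    (u : ℕ → ℝ → ℝ)
    (hu : ∀ t x, u t x = (1 / α t) * (1 - Real.exp (-(α t) * x))) :
    ∃ X : ℕ → Ω → ℝ,
      (IsAlloc μ T ℱ B W X ∧
        (∀ Y, IsAlloc μ T ℱ B W Y → allocVal μ T u B Y ≤ allocVal μ T u B X)) ∧
      (∀ t ∈ Finset.Icc 1 T, ∀ᵐ ω ∂μ,
        Real.exp (-(α t) * (X t ω / B t ω)) = M t ω) ∧
      (∀ X' : ℕ → Ω → ℝ,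
        IsAlloc μ T ℱ B W X' →
        (∀ Y, IsAlloc μ T ℱ B W Y → allocVal μ T u B Y ≤ allocVal μ T u B X') →
        ∀ t ∈ Finset.Icc 1 T, X' t =ᵐ[μ] X t) := by
  have hL := fun t (ht : t ∈ Icc 1 T) =>
    L_aestronglyMeasurable_aeBddPos hℱle hWmeas hWbdd hLT hLstep ht
  have hMeq := fun t (ht : t ∈ Icc 1 T) => M_ae_eq_mul_prodLPow hM1 hMt ht
  have hM := fun t (ht : t ∈ Icc 1 T) => M_aestronglyMeasurable_aeBddPos hℱmono hL hMeq ht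
  have hTmem : T ∈ Icc 1 T := mem_Icc.2 ⟨hT, le_rfl⟩
  have hMTi : Integrable (M T) μ := (hM T hTmem).2.integrable ((hM T hTmem).1.mono (hℱle T))
  have hmart : ∀ t ∈ Icc 1 T, M t =ᵐ[μ] μ[M T|ℱ t] := fun t ht =>
    ae_eq_condExp_of_condExp_succ hℱmono hℱle (hM T hTmem).1 hMTi
      (fun s hs hsT => condExp_M_succ_ae_eq hℱmono hℱle hα hβ hL hLstep hMeq hs hsT)
      (mem_Icc.1 ht).1 (mem_Icc.1 ht).2
  have hB1 := fun t (ht : t ∈ Icc 1 T) => one_le_B hr_nonneg hB ht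
  have hBm := fun t (ht : t ∈ Icc 1 T) => measurable_B hℱmono hr_meas hB ht
  obtain ⟨X, hX, hXM⟩ := exists_isAlloc_exp_eq hα hB1 hBm
    (fun t ht => exists_B_le hr_nonneg hr_bdd hB ht) (fun t ht => (hM t ht).2) hmart
    (sum_neg_log_M_div_eq hT hα hβ (fun t ht => (hL t ht).2) hLT hMeq)
  have hu_cont : ∀ t ∈ Icc 1 T, Continuous (u t) := fun t _ => by
    rw [funext (hu t)]
    fun_prop
  obtain ⟨hopt, huniq⟩ := isOptimalAlloc_of_supergradient hℱle hB1 hBm hu_cont hMTi hmart hX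
    fun t ht => by
      filter_upwards [hXM t ht] with ω hω y hy
      rw [hu, hu, ← hω]
      exact exp_utility_lt_tangent (hα t ht) hy
  exact ⟨X, hopt, hXM, fun X' hX' hX'opt => huniq X' ⟨hX', hX'opt⟩⟩
end
end
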